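/- Let H be a separable analytic reproducing kernel Hilbert space of E-valued functions on 𝔻, with E ≠ {0}, on which the multiplication operator M_z is bounded, and suppose the kernel is quasi-scalar: there exist complex numbers a_{m,n} (m, n ∈ ℕ) such that ⟨K_{m,ζ}, K_{n,η}⟩_H = a_{m,n}·⟨ζ, η⟩_E for all ζ, η ∈ E. If the doubly indexed family (a_{m,n}/(n!·m!))_{n,m∈ℕ} is F-summable, then M_z* is chaotic on H. -/

import Mathlib

/-!
Up to normalisation the kernel vectors `e n = K_{n,η} / n!` form a backward-shift chain for
`T = M_z*`: `T e₀ = 0` and `T e_{n+1} = e_n`, because the `(n+1)`-st derivative of `z f(z)` at `0`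
is `(n+1) f⁽ⁿ⁾(0)`. Quasi-scalarity gives `‖∑_{n∈F} e n‖² = Re (∑∑ a_{m,n}/(n! m!)) ‖η‖²`, so
`F`-summability says exactly that every chain is summable, and the chains span a dense subspace
because a function orthogonal to all of them has vanishing Taylor coefficients at `0`.

For any such chain, `T ^ m` kills `e n` once `m > n`, while `e (n + m) → 0` is a preimage of
`e n` under `T ^ m`; Birkhoff's transitivity theorem turns this into a dense orbit. Finally
`∑ₗ e (n + l k)` is a `k`-periodic point that differs from `e n` by a tail of a summable series.
-/

open Metric Filter ContinuousLinearMap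

/-- A doubly indexed family `c : ℕ → ℕ → ℂ` is `F`-summable if for every `ε > 0` there is
`N ∈ ℕ` such that `|∑_{n ∈ F} ∑_{m ∈ F} c n m| < ε` for every finite set
`F ⊆ {N, N+1, …}`. -/
def FSummable (c : ℕ → ℕ → ℂ) : Prop :=
  ∀ ε > (0 : ℝ), ∃ N : ℕ, ∀ F : Finset ℕ, (∀ n ∈ F, N ≤ n) →
    ‖∑ n ∈ F, ∑ m ∈ F, c n m‖ < ε

open scoped Topology

theorem exists_dense_orbit_of_transitive {X : Type*} [TopologicalSpace X] [BaireSpace X]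
    [SecondCountableTopology X] [Nonempty X] {f : X → X} (hf : Continuous f)
    (htrans : ∀ U V : Set X, IsOpen U → IsOpen V → U.Nonempty → V.Nonempty →
      ∃ m, (U ∩ f^[m] ⁻¹' V).Nonempty) :
    ∃ x, Dense (Set.range fun m => f^[m] x) := by
  obtain ⟨B, hBc, -, hB⟩ := TopologicalSpace.exists_countable_basis X
  have hdense : Dense (⋂ V ∈ {V ∈ B | V.Nonempty}, ⋃ m, f^[m] ⁻¹' V) := by
    refine dense_biInter_of_isOpen (fun V hV => ?_) (hBc.mono fun V hV => hV.1) (fun V hV => ?_)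
    · exact isOpen_iUnion fun m => (hB.isOpen hV.1).preimage (hf.iterate m)
    · refine dense_iff_inter_open.2 fun U hU hUne => ?_
      obtain ⟨m, z, hz⟩ := htrans U V hU (hB.isOpen hV.1) hUne hV.2
      exact ⟨z, hz.1, Set.mem_iUnion.2 ⟨m, hz.2⟩⟩
  obtain ⟨x, hx⟩ := hdense.nonempty
  refine ⟨x, hB.dense_iff.2 fun V hVB hVne => ?_⟩
  obtain ⟨m, hm⟩ := Set.mem_iUnion.1 (Set.mem_iInter₂.1 hx V ⟨hVB, hVne⟩)
  exact ⟨f^[m] x, hm, m, rfl⟩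

namespace ContinuousLinearMap

section Submodules

variable {R X : Type*} [Semiring R] [TopologicalSpace X] [AddCommMonoid X] [Module R X]
  (T : X →L[R] X)

def generalizedKernel : Submodule R X where
  carrier := {u | ∀ᶠ m in atTop, (T ^ m) u = 0}
  add_mem' hu hv := by
    filter_upwards [hu, hv] with m hum hvm
    rw [map_add, hum, hvm, add_zero]
  zero_mem' := Eventually.of_forall fun m => map_zero _
  smul_mem' c u hu := by
    filter_upwards [hu] with m hum
    rw [map_smul, hum, smul_zero]

theorem pow_mul_apply_eq_self {y : X} {k : ℕ} (hy : (T ^ k) y = y) (j : ℕ) :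
    (T ^ (k * j)) y = y := by
  rw [pow_mul, FunLike.coe_pow_eq_iterate]
  exact Function.IsFixedPt.iterate hy j

def periodicSubmodule : Submodule R X where
  carrier := {y | ∃ k, 1 ≤ k ∧ (T ^ k) y = y}
  add_mem' := by
    rintro y z ⟨k, hk, hy⟩ ⟨l, hl, hz⟩
    refine ⟨k * l, Nat.one_le_iff_ne_zero.2 (by positivity), ?_⟩
    rw [map_add, T.pow_mul_apply_eq_self hy, mul_comm, T.pow_mul_apply_eq_self hz]
  zero_mem' := ⟨1, le_rfl, map_zero _⟩
  smul_mem' := by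
    rintro c y ⟨k, hk, hy⟩
    exact ⟨k, hk, by rw [map_smul, hy]⟩

variable [ContinuousAdd X] [ContinuousConstSMul R X]

def smallPreimages : Submodule R X where
  carrier := {v | ∃ w : ℕ → X, Tendsto w atTop (𝓝 0) ∧ ∀ᶠ m in atTop, (T ^ m) (w m) = v}
  add_mem' := by
    rintro v v' ⟨w, hw, hwv⟩ ⟨w', hw', hwv'⟩
    refine ⟨fun m => w m + w' m, by simpa using hw.add hw', ?_⟩
    filter_upwards [hwv, hwv'] with m hm hm'
    rw [map_add, hm, hm']
  zero_mem' := ⟨0, tendsto_const_nhds, Eventually.of_forall fun m => map_zero _⟩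
  smul_mem' := by
    rintro c v ⟨w, hw, hwv⟩
    refine ⟨fun m => c • w m, by simpa using hw.const_smul c, ?_⟩
    filter_upwards [hwv] with m hm
    rw [map_smul, hm]

end Submodules

/-- `T` is topologically transitive: if `T ^ m u = 0` and `T ^ m (w m) = v` with `w m → 0`,
then for large `m` the point `u + w m` lies near `u` and `T ^ m` maps it to `v`. -/
theorem exists_dense_orbit_of_dense {R X : Type*} [Semiring R] [NormedAddCommGroup X]
    [Module R X] [ContinuousConstSMul R X] [CompleteSpace X]
    [TopologicalSpace.SeparableSpace X] (T : X →L[R] X)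
    (hker : Dense (T.generalizedKernel : Set X)) (hpre : Dense (T.smallPreimages : Set X)) :
    ∃ x, Dense (Set.range fun m : ℕ => (T ^ m) x) := by
  simp_rw [FunLike.coe_pow_eq_iterate]
  refine exists_dense_orbit_of_transitive T.continuous fun U V hU hV hUne hVne => ?_
  obtain ⟨u, hu, huU⟩ := hker.exists_mem_open hU hUne
  obtain ⟨v, ⟨w, hw, hwv⟩, hvV⟩ := hpre.exists_mem_open hV hVne
  have hnear : ∀ᶠ m in atTop, u + w m ∈ U := by
    have := (tendsto_const_nhds (x := u)).add hw
    rw [add_zero] at this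
    exact this (hU.mem_nhds huU)
  obtain ⟨m, hum, hwm, hmU⟩ := (hu.and (hwv.and hnear)).exists
  refine ⟨m, u + w m, hmU, ?_⟩
  rw [Set.mem_preimage, ← FunLike.coe_pow_eq_iterate, map_add, hum, hwm, zero_add]
  exact hvV

section BackwardShift

variable {𝕜 X : Type*} [NormedField 𝕜] [NormedAddCommGroup X] [NormedSpace 𝕜 X]
  (T : X →L[𝕜] X) {e : ℕ → X}

theorem pow_apply_add_eq (hsucc : ∀ n, T (e (n + 1)) = e n) (n m : ℕ) :
    (T ^ m) (e (n + m)) = e n := by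
  induction m with
  | zero => simp
  | succ m ih => rw [pow_succ, mul_apply_eq_comp, ← add_assoc, hsucc, ih]

theorem pow_apply_eq_zero_of_lt (h0 : T (e 0) = 0) (hsucc : ∀ n, T (e (n + 1)) = e n)
    {n m : ℕ} (h : n < m) : (T ^ m) (e n) = 0 := by
  obtain ⟨k, rfl⟩ := Nat.exists_eq_add_of_lt h
  have hn := T.pow_apply_add_eq hsucc 0 n
  rw [zero_add] at hn
  rw [show n + k + 1 = (k + 1) + n by omega, pow_add, mul_apply_eq_comp, hn, pow_succ,
    mul_apply_eq_comp, h0, map_zero]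

theorem mem_generalizedKernel_of_backwardShift (h0 : T (e 0) = 0)
    (hsucc : ∀ n, T (e (n + 1)) = e n) (n : ℕ) : e n ∈ T.generalizedKernel :=
  (eventually_gt_atTop n).mono fun _ hm => T.pow_apply_eq_zero_of_lt h0 hsucc hm

theorem mem_smallPreimages_of_backwardShift (hsucc : ∀ n, T (e (n + 1)) = e n)
    (he : Tendsto e atTop (𝓝 0)) (n : ℕ) : e n ∈ T.smallPreimages :=
  ⟨fun m => e (n + m), he.comp ((tendsto_add_atTop_nat n).congr fun m => add_comm m n),
    Eventually.of_forall (T.pow_apply_add_eq hsucc n)⟩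

/-- For `k > n` the vector `∑ₗ e (n + l k)` is `k`-periodic, and it is close to `e n`
once `k` is large, being `e n` plus a tail of the summable family `e`. -/
theorem mem_closure_periodicSubmodule_of_backwardShift [CompleteSpace X]
    (h0 : T (e 0) = 0) (hsucc : ∀ n, T (e (n + 1)) = e n) (he : Summable e) (n : ℕ) :
    e n ∈ closure (T.periodicSubmodule : Set X) := by
  refine Metric.mem_closure_iff.2 fun ε hε => ?_
  obtain ⟨s, hs⟩ := summable_iff_tsum_vanishing.1 he (ball 0 ε) (ball_mem_nhds 0 hε)
  set k := max (n + 1) (s.sup id + 1)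
  have hnk : n < k := by omega
  have hsk : s.sup id < k := by omega
  set ψ : ℕ → ℕ := fun l => n + l * k
  have hψ : Function.Injective ψ := fun a b hab =>
    Nat.eq_of_mul_eq_mul_right (by omega) (Nat.add_left_cancel hab)
  have hψ' : Function.Injective fun l => ψ (l + 1) := hψ.comp (add_left_injective 1)
  have htail : Disjoint (Set.range fun l => ψ (l + 1)) (s : Set ℕ) := by
    refine Set.disjoint_left.2 ?_
    rintro _ ⟨l, rfl⟩ hl
    have : ψ (l + 1) ≤ s.sup id := Finset.le_sup (f := id) hl
    have : k ≤ ψ (l + 1) := le_add_left (Nat.le_mul_of_pos_left k l.succ_pos)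
    omega
  have hsplit : ∑' l, e (ψ l) = e n + ∑' l, e (ψ (l + 1)) := by
    simpa [ψ] using (he.comp_injective hψ).tsum_eq_zero_add
  refine ⟨∑' l, e (ψ l), ⟨k, by omega, ?_⟩, ?_⟩
  · have hshift : ∀ l, (T ^ k) (e (ψ (l + 1))) = e (ψ l) := fun l => by
      rw [show ψ (l + 1) = ψ l + k by simp only [ψ]; ring, T.pow_apply_add_eq hsucc]
    conv_lhs => rw [hsplit]
    rw [map_add, T.pow_apply_eq_zero_of_lt h0 hsucc hnk, zero_add,
      (T ^ k).map_tsum (f := fun l => e (ψ (l + 1))) (he.comp_injective hψ'), tsum_congr hshift]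
  · rw [hsplit, dist_eq_norm, sub_add_cancel_left, norm_neg, ← mem_ball_zero_iff,
      ← tsum_range (fun m => e m) hψ']
    exact hs _ htail

end BackwardShift

theorem chaotic_of_dense_span_backwardShift {𝕜 X κ : Type*} [NormedField 𝕜]
    [NormedAddCommGroup X] [NormedSpace 𝕜 X] [CompleteSpace X]
    [TopologicalSpace.SeparableSpace X] (T : X →L[𝕜] X) (e : κ → ℕ → X)
    (h0 : ∀ i, T (e i 0) = 0) (hsucc : ∀ i n, T (e i (n + 1)) = e i n)
    (he : ∀ i, Summable (e i))
    (hdense : Dense (Submodule.span 𝕜 (Set.range (Function.uncurry e)) : Set X)) :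
    (∃ x, Dense (Set.range fun m : ℕ => (T ^ m) x)) ∧
      Dense {y : X | ∃ k : ℕ, 1 ≤ k ∧ (T ^ k) y = y} := by
  have dense_of_mem (p : Submodule 𝕜 X) (hp : ∀ i n, e i n ∈ p) : Dense (p : Set X) :=
    hdense.mono (Submodule.span_le.2 (by rintro _ ⟨⟨i, n⟩, rfl⟩; exact hp i n))
  refine ⟨T.exists_dense_orbit_of_dense ?_ ?_, ?_⟩
  · exact dense_of_mem _ fun i => T.mem_generalizedKernel_of_backwardShift (h0 i) (hsucc i)
  · exact dense_of_mem _ fun i =>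
      T.mem_smallPreimages_of_backwardShift (hsucc i) (he i).tendsto_atTop_zero
  · exact dense_closure.1 (dense_of_mem T.periodicSubmodule.topologicalClosure fun i =>
      T.mem_closure_periodicSubmodule_of_backwardShift (h0 i) (hsucc i) (he i))

end ContinuousLinearMap

theorem iteratedDerivWithin_id_smul_zero {𝕜 F : Type*} [NontriviallyNormedField 𝕜]
    [NormedAddCommGroup F] [NormedSpace 𝕜 F] {s : Set 𝕜} (hs : UniqueDiffOn 𝕜 s)
    (h0 : (0 : 𝕜) ∈ s) {f : 𝕜 → F} {n : ℕ} (hf : ContDiffWithinAt 𝕜 (n + 1) f s 0) :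
    iteratedDerivWithin (n + 1) (fun w => w • f w) s 0
      = ((n : 𝕜) + 1) • iteratedDerivWithin n f s 0 := by
  have leibniz := iteratedDerivWithin_smul h0 hs (f := id) contDiffWithinAt_id
    (by exact_mod_cast hf)
  rw [Finset.sum_eq_single 1 (fun i _ hi => by simp [iteratedDerivWithin_id h0 hs, hi])
    (by simp)] at leibniz
  refine leibniz.trans ?_
  rw [show ((n : 𝕜) + 1) = ((n + 1 : ℕ) : 𝕜) by push_cast; ring, Nat.cast_smul_eq_nsmul]
  simp [iteratedDerivWithin_id h0 hs]

theorem eqOn_zero_of_iteratedDerivWithin_eq_zero {E : Type*} [NormedAddCommGroup E]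
    [NormedSpace ℂ E] [CompleteSpace E] {f : ℂ → E} {c : ℂ} {r : ℝ}
    (hf : DifferentiableOn ℂ f (ball c r))
    (hderiv : ∀ n, iteratedDerivWithin n f (ball c r) c = 0) :
    Set.EqOn f 0 (ball c r) := by
  intro z hz
  have hc : c ∈ ball c r := mem_ball_self (pos_of_mem_ball hz)
  have taylor := Complex.hasSum_taylorSeries_on_ball hf hz
  simp only [← iteratedDerivWithin_of_isOpen isOpen_ball hc, hderiv, smul_zero] at taylor
  exact taylor.unique hasSum_zero

noncomputable def normalizedKernel {H E : Type*} [AddCommGroup H] [Module ℂ H]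
    (K : ℕ → E → H) (η : E) (n : ℕ) : H :=
  (n.factorial : ℂ)⁻¹ • K n η

section Kernel

variable {H E : Type*} [NormedAddCommGroup H] [InnerProductSpace ℂ H]
  [NormedAddCommGroup E] [InnerProductSpace ℂ E] {K : ℕ → E → H}

theorem inner_normalizedKernel {a : ℕ → ℕ → ℂ}
    (ha : ∀ (m n : ℕ) (ζ η : E), inner ℂ (K m ζ) (K n η) = a m n * inner ℂ ζ η)
    (η : E) (m n : ℕ) :
    inner ℂ (normalizedKernel K η m) (normalizedKernel K η n)
      = a m n / (n.factorial * m.factorial) * (‖η‖ : ℂ) ^ 2 := by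
  simp only [normalizedKernel, inner_smul_left, inner_smul_right, ha,
    inner_self_eq_norm_sq_to_K, map_inv₀, Complex.conj_natCast, RCLike.ofReal_eq_complex_ofReal]
  ring

theorem norm_sq_sum_normalizedKernel {a : ℕ → ℕ → ℂ}
    (ha : ∀ (m n : ℕ) (ζ η : E), inner ℂ (K m ζ) (K n η) = a m n * inner ℂ ζ η)
    (η : E) (F : Finset ℕ) :
    ‖∑ n ∈ F, normalizedKernel K η n‖ ^ 2
      = (∑ n ∈ F, ∑ m ∈ F, a m n / (n.factorial * m.factorial)).re * ‖η‖ ^ 2 := by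
  rw [← inner_self_eq_norm_sq (𝕜 := ℂ), sum_inner, Finset.sum_comm]
  simp only [inner_sum, inner_normalizedKernel ha, ← Finset.sum_mul]
  rw [← Complex.ofReal_pow]
  exact Complex.re_mul_ofReal _ _

theorem summable_normalizedKernel [CompleteSpace H] {a : ℕ → ℕ → ℂ}
    (ha : ∀ (m n : ℕ) (ζ η : E), inner ℂ (K m ζ) (K n η) = a m n * inner ℂ ζ η)
    (hsum : FSummable fun n m => a m n / (n.factorial * m.factorial)) (η : E) :
    Summable (normalizedKernel K η) := by
  refine summable_iff_vanishing_norm.2 fun ε hε => ?_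
  obtain ⟨N, hN⟩ := hsum (ε ^ 2 / (‖η‖ ^ 2 + 1)) (by positivity)
  refine ⟨Finset.range N, fun t ht => ?_⟩
  have htN : ∀ n ∈ t, N ≤ n := fun n hn => by simpa using Finset.disjoint_left.1 ht hn
  have hsq : ‖∑ n ∈ t, normalizedKernel K η n‖ ^ 2 < ε ^ 2 := calc
    _ = _ := norm_sq_sum_normalizedKernel ha η t
    _ ≤ ε ^ 2 / (‖η‖ ^ 2 + 1) * ‖η‖ ^ 2 := by
      gcongr
      exact (Complex.re_le_norm _).trans (hN t htN).le
    _ < ε ^ 2 := by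
      rw [div_mul_eq_mul_div, div_lt_iff₀ (by positivity)]
      nlinarith [pow_pos hε 2]
  exact lt_of_pow_lt_pow_left₀ 2 hε.le hsq

variable {ι : H →ₗ[ℂ] (ℂ → E)}

theorem dense_span_normalizedKernel [CompleteSpace H] [CompleteSpace E]
    (hinj : ∀ f g : H, Set.EqOn (ι f) (ι g) (ball (0 : ℂ) 1) → f = g)
    (hanal : ∀ f : H, DifferentiableOn ℂ (ι f) (ball (0 : ℂ) 1))
    (hK : ∀ (n : ℕ) (η : E) (f : H),
      inner ℂ f (K n η) = inner ℂ (iteratedDerivWithin n (ι f) (ball (0 : ℂ) 1) 0) η) :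
    Dense (Submodule.span ℂ (Set.range (Function.uncurry (normalizedKernel K))) : Set H) := by
  rw [Submodule.dense_iff_topologicalClosure_eq_top, Submodule.topologicalClosure_eq_top_iff,
    Submodule.eq_bot_iff]
  intro x hx
  have hderiv (n : ℕ) : iteratedDerivWithin n (ι x) (ball 0 1) 0 = 0 := by
    have h := (Submodule.mem_orthogonal _ x).1 hx _
      (Submodule.subset_span ⟨(iteratedDerivWithin n (ι x) (ball 0 1) 0, n), rfl⟩)
    rw [Function.uncurry_apply_pair, normalizedKernel, inner_smul_left, mul_eq_zero,
      inner_eq_zero_symm, hK] at h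
    simpa [Nat.factorial_ne_zero] using h
  refine hinj x 0 fun w hw => ?_
  rw [map_zero]
  exact eqOn_zero_of_iteratedDerivWithin_eq_zero (hanal x) hderiv hw

variable [CompleteSpace H] {Mz : H →L[ℂ] H}
  (hMz : ∀ f : H, ∀ w ∈ ball (0 : ℂ) 1, ι (Mz f) w = w • ι f w)
  (hK : ∀ (n : ℕ) (η : E) (f : H),
    inner ℂ f (K n η) = inner ℂ (iteratedDerivWithin n (ι f) (ball (0 : ℂ) 1) 0) η)
include hMz hK

theorem adjoint_apply_kernel_zero (η : E) : adjoint Mz (K 0 η) = 0 := by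
  refine ext_inner_left ℂ fun f => ?_
  rw [adjoint_inner_right, hK, inner_zero_right, iteratedDerivWithin_zero,
    hMz f 0 (mem_ball_self one_pos), zero_smul, inner_zero_left]

theorem adjoint_apply_kernel_succ [CompleteSpace E]
    (hanal : ∀ f : H, DifferentiableOn ℂ (ι f) (ball (0 : ℂ) 1)) (n : ℕ) (η : E) :
    adjoint Mz (K (n + 1) η) = ((n : ℂ) + 1) • K n η := by
  refine ext_inner_left ℂ fun f => ?_
  have h0 : (0 : ℂ) ∈ ball (0 : ℂ) 1 := mem_ball_self one_pos
  rw [adjoint_inner_right, hK, inner_smul_right, hK, iteratedDerivWithin_congr (hMz f) h0,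
    iteratedDerivWithin_id_smul_zero isOpen_ball.uniqueDiffOn h0
      ((hanal f).contDiffOn isOpen_ball 0 h0), inner_smul_left]
  simp

theorem adjoint_apply_normalizedKernel_zero (η : E) :
    adjoint Mz (normalizedKernel K η 0) = 0 := by
  rw [normalizedKernel, map_smul, adjoint_apply_kernel_zero hMz hK, smul_zero]

theorem adjoint_apply_normalizedKernel_succ [CompleteSpace E]
    (hanal : ∀ f : H, DifferentiableOn ℂ (ι f) (ball (0 : ℂ) 1)) (η : E) (n : ℕ) :
    adjoint Mz (normalizedKernel K η (n + 1)) = normalizedKernel K η n := by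
  rw [normalizedKernel, normalizedKernel, map_smul, adjoint_apply_kernel_succ hMz hK hanal,
    smul_smul, Nat.factorial_succ]
  congr 1
  push_cast
  field_simp

end Kernel

theorem stmt10_general {H E : Type*}
    [NormedAddCommGroup H] [InnerProductSpace ℂ H] [CompleteSpace H]
    [TopologicalSpace.SeparableSpace H]
    [NormedAddCommGroup E] [InnerProductSpace ℂ E] [CompleteSpace E]
    (ι : H →ₗ[ℂ] (ℂ → E))
    (hinj : ∀ f g : H, Set.EqOn (ι f) (ι g) (ball (0 : ℂ) 1) → f = g)
    (hanal : ∀ f : H, DifferentiableOn ℂ (ι f) (ball (0 : ℂ) 1))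
    (Mz : H →L[ℂ] H)
    (hMz : ∀ f : H, ∀ w ∈ ball (0 : ℂ) 1, ι (Mz f) w = w • ι f w)
    (K : ℕ → E → H)
    (hK : ∀ (n : ℕ) (η : E) (f : H),
      (inner ℂ f (K n η) : ℂ) =
        (inner ℂ (iteratedDerivWithin n (ι f) (ball (0 : ℂ) 1) 0) η : ℂ))
    (a : ℕ → ℕ → ℂ)
    (ha : ∀ (m n : ℕ) (ζ η : E),
      (inner ℂ (K m ζ) (K n η) : ℂ) = a m n * (inner ℂ ζ η : ℂ))
    (hsum : FSummable (fun n m : ℕ => a m n / ((n.factorial : ℂ) * (m.factorial : ℂ)))) :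
    (∃ g : H, Dense (Set.range fun m : ℕ => ((adjoint Mz) ^ m) g)) ∧
      Dense {y : H | ∃ k : ℕ, 1 ≤ k ∧ ((adjoint Mz) ^ k) y = y} :=
  (adjoint Mz).chaotic_of_dense_span_backwardShift (normalizedKernel K)
    (adjoint_apply_normalizedKernel_zero hMz hK)
    (adjoint_apply_normalizedKernel_succ hMz hK hanal)
    (summable_normalizedKernel ha hsum) (dense_span_normalizedKernel hinj hanal hK)

/-- Quasi-scalar case, chaos: suppose the kernel of the analytic reproducing kernel
Hilbert space `H` of `E`-valued functions (`E ≠ 0`) is quasi-scalar, i.e.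
`⟨K_{m,ζ}, K_{n,η}⟩ = a m n · ⟨ζ, η⟩`, and `M_z` is bounded on `H`. If the family
`(a m n/(n!·m!))_{n,m}` is `F`-summable then `M_z*` is chaotic. -/
theorem stmt10 {H E : Type*}
    [NormedAddCommGroup H] [InnerProductSpace ℂ H] [CompleteSpace H]
    [TopologicalSpace.SeparableSpace H]
    [NormedAddCommGroup E] [InnerProductSpace ℂ E] [CompleteSpace E] [Nontrivial E]
    (ι : H →ₗ[ℂ] (ℂ → E))
    (hinj : ∀ f g : H, Set.EqOn (ι f) (ι g) (ball (0 : ℂ) 1) → f = g)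
    (hanal : ∀ f : H, DifferentiableOn ℂ (ι f) (ball (0 : ℂ) 1))
    (heval : ∀ w ∈ ball (0 : ℂ) 1, Continuous fun f : H => ι f w)
    (Mz : H →L[ℂ] H)
    (hMz : ∀ f : H, ∀ w ∈ ball (0 : ℂ) 1, ι (Mz f) w = w • ι f w)
    (K : ℕ → E → H)
    (hK : ∀ (n : ℕ) (η : E) (f : H),
      (inner ℂ f (K n η) : ℂ) =
        (inner ℂ (iteratedDerivWithin n (ι f) (ball (0 : ℂ) 1) 0) η : ℂ))
    (a : ℕ → ℕ → ℂ)
    (ha : ∀ (m n : ℕ) (ζ η : E),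
      (inner ℂ (K m ζ) (K n η) : ℂ) = a m n * (inner ℂ ζ η : ℂ))
    (hsum : FSummable (fun n m : ℕ => a m n / ((n.factorial : ℂ) * (m.factorial : ℂ)))) :
    (∃ g : H, Dense (Set.range fun m : ℕ => ((adjoint Mz) ^ m) g)) ∧
      Dense {y : H | ∃ k : ℕ, 1 ≤ k ∧ ((adjoint Mz) ^ k) y = y} :=
  stmt10_general ι hinj hanal Mz hMz K hK a ha hsum
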